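/- Let σ ∈ S_k, τ ∈ S_ℓ, n = k+ℓ, and let ρ ∈ S_n be a shuffle of σ and τ̄ (where τ̄ adds k to every letter of τ). Then the RSK insertion tableau of ρ, restricted to entries {1,...,k}, equals the RSK insertion tableau of σ; and the standardization of its restriction to entries {k+1,...,n} equals the RSK insertion tableau of τ. -/

import Mathlib

/-!
The letters `≤ k` of a tableau with weakly increasing rows are never moved by the insertion of a
letter `> k` (at most a new, empty row appears), and inserting a letter `≤ k` acts on them exactly
as insertion into the tableau of small letters alone. So the small part of `P(ρ)` is `P(σ)`.

For the large letters we use one direction of Knuth's theorem: the row reading word of `P(w)` is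
Knuth equivalent to `w`, and Knuth equivalent words have the same insertion tableau. The latter
holds because inserting the two sides of an elementary Knuth move into a weakly increasing row
gives the same row, while the bumped words are equal or again differ by an elementary move.
Knuth equivalence survives restriction to an interval of values, so the reading word of the large
part of `P(ρ)` is equivalent to `τ̄`; hence its rectification is `P(τ̄)`, and shifting all values
down by `k` commutes with insertion.
-/

/-- `u` is the one-line word of a permutation of `{1, …, n}`. -/
def IsPermWord (n : ℕ) (u : List ℕ) : Prop := u.Perm (List.range' 1 n)

/-- The left inversion set of a word `u`. -/
def InvW (u : List ℕ) : Set (ℕ × ℕ) :=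
  {p | p.1 < p.2 ∧ p.1 ∈ u ∧ p.2 ∈ u ∧ u.idxOf p.2 < u.idxOf p.1}

/-- Schensted row insertion of `x` into a row: returns the new row together with the
bumped entry (if any). -/
def rowInsert : List ℕ → ℕ → List ℕ × Option ℕ
  | [], x => ([x], none)
  | a :: r, x =>
    if a ≤ x then
      let p := rowInsert r x
      (a :: p.1, p.2)
    else (x :: r, some a)

/-- Schensted insertion of `x` into a tableau (a list of rows). -/
def tabInsert : List (List ℕ) → ℕ → List (List ℕ)
  | [], x => [[x]]
  | row :: rest, x =>
    match rowInsert row x with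
    | (row', none) => row' :: rest
    | (row', some b) => row' :: tabInsert rest b

/-- The RSK insertion tableau `P(w)` of a word `w`. -/
def RSKP (w : List ℕ) : List (List ℕ) := w.foldl tabInsert []

/-- The shape of a tableau: the list of its row lengths. -/
def shape (T : List (List ℕ)) : List ℕ := T.map List.length

/-- `T` is a standard Young tableau with `n` cells: its entries are exactly `1, …, n`,
its rows are nonempty and strictly increasing, and its columns are strictly increasing
(in particular row lengths weakly decrease). -/
def IsSYT (n : ℕ) (T : List (List ℕ)) : Prop :=
  T.flatten.Perm (List.range' 1 n) ∧
  (∀ r ∈ T, r ≠ [] ∧ List.Chain' (· < ·) r) ∧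
  List.Chain' (fun r₁ r₂ => r₂.length ≤ r₁.length ∧
    ∀ c, c < r₂.length → r₁.getD c 0 < r₂.getD c 0) T

/-- The (skew) restriction of a tableau to the entries lying in the segment `[i, j]`. -/
def restrictTab (T : List (List ℕ)) (i j : ℕ) : List (List ℕ) :=
  T.map (List.filter (fun v => decide (i ≤ v ∧ v ≤ j)))

/-- The row reading word of a (skew) tableau: rows read left to right,
from the bottom row up. -/
def readWord (T : List (List ℕ)) : List ℕ := T.reverse.flatten

/-- The standardization `st(T_{[i,j]})` of the restriction of `T` to the segment `[i, j]`:
lower all entries by `i - 1` and rectify to straight shape by jeu de taquin; rectification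
is computed as the RSK insertion tableau of the row reading word, which agrees with
jeu de taquin rectification. -/
def stTab (T : List (List ℕ)) (i j : ℕ) : List (List ℕ) :=
  RSKP ((readWord (restrictTab T i j)).map (fun v => v - (i - 1)))

open Relation

lemma rowInsert_append_of_forall_le {P : List ℕ} {x : ℕ} (hP : ∀ a ∈ P, a ≤ x) (R : List ℕ) :
    rowInsert (P ++ R) x = (P ++ (rowInsert R x).1, (rowInsert R x).2) := by
  induction P with
  | nil => rfl
  | cons a P ih =>
    simp only [List.mem_cons, forall_eq_or_imp] at hP
    simp [rowInsert, hP.1, ih hP.2]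

lemma rowInsert_of_forall_le {R : List ℕ} {x : ℕ} (h : ∀ a ∈ R, a ≤ x) :
    rowInsert R x = (R ++ [x], none) := by
  simpa [rowInsert] using rowInsert_append_of_forall_le h []

lemma rowInsert_append_cons {P : List ℕ} {x b : ℕ} (hP : ∀ a ∈ P, a ≤ x) (hb : x < b)
    (Q : List ℕ) : rowInsert (P ++ b :: Q) x = (P ++ x :: Q, some b) := by
  simp [rowInsert_append_of_forall_le hP, rowInsert, Nat.not_le.2 hb]

lemma mem_rowInsert_fst {R : List ℕ} {x v : ℕ} (h : v ∈ (rowInsert R x).1) : v = x ∨ v ∈ R := by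
  induction R with
  | nil => simpa [rowInsert] using h
  | cons a r ih =>
    unfold rowInsert at h
    split_ifs at h <;> simp only [List.mem_cons] at h ⊢ <;> grind

lemma rowInsert_snd_eq_some {R : List ℕ} {x b : ℕ} (h : (rowInsert R x).2 = some b) :
    b ∈ R ∧ x < b := by
  induction R with
  | nil => simp [rowInsert] at h
  | cons a r ih =>
    unfold rowInsert at h
    split_ifs at h with hax
    · obtain ⟨hb, hxb⟩ := ih h
      exact ⟨List.mem_cons_of_mem a hb, hxb⟩
    · simp only [Option.some.injEq] at h
      subst h
      simpa using hax

lemma rowInsert_snd_eq_none_iff {R : List ℕ} {x : ℕ} :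
    (rowInsert R x).2 = none ↔ ∀ a ∈ R, a ≤ x := by
  induction R with
  | nil => simp [rowInsert]
  | cons a r ih =>
    unfold rowInsert
    split_ifs with hax <;> simp [hax, ih]

lemma le_of_rowInsert_snd_eq_some {R : List ℕ} (hR : R.Pairwise (· ≤ ·)) {x b c : ℕ}
    (h : (rowInsert R x).2 = some b) (hc : c ∈ R) (hxc : x < c) : b ≤ c := by
  induction R with
  | nil => simp at hc
  | cons a r ih =>
    rw [List.pairwise_cons] at hR
    unfold rowInsert at h
    split_ifs at h with hax
    · rcases List.mem_cons.1 hc with rfl | hc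
      · omega
      · exact ih hR.2 h hc
    · simp only [Option.some.injEq] at h
      subst h
      rcases List.mem_cons.1 hc with rfl | hc
      exacts [le_rfl, hR.1 c hc]

lemma pairwise_rowInsert {R : List ℕ} (hR : R.Pairwise (· ≤ ·)) (x : ℕ) :
    (rowInsert R x).1.Pairwise (· ≤ ·) := by
  induction R with
  | nil => simp [rowInsert]
  | cons a r ih =>
    rw [List.pairwise_cons] at hR
    unfold rowInsert
    split_ifs with hax
    · refine List.pairwise_cons.2 ⟨fun v hv => ?_, ih hR.2⟩
      rcases mem_rowInsert_fst hv with rfl | hv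
      exacts [hax, hR.1 v hv]
    · exact List.pairwise_cons.2 ⟨fun v hv => by have := hR.1 v hv; omega, hR.2⟩

lemma exists_eq_append_of_pairwise {R : List ℕ} (hR : R.Pairwise (· ≤ ·)) (t : ℕ) :
    ∃ P Q, R = P ++ Q ∧ (∀ a ∈ P, a ≤ t) ∧ ∀ c ∈ Q, t < c := by
  induction R with
  | nil => exact ⟨[], [], rfl, by simp, by simp⟩
  | cons a r ih =>
    rw [List.pairwise_cons] at hR
    by_cases hat : a ≤ t
    · obtain ⟨P, Q, rfl, hP, hQ⟩ := ih hR.2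
      exact ⟨a :: P, Q, rfl, by simpa [hat] using hP, hQ⟩
    · refine ⟨[], a :: r, rfl, by simp, fun c hc => ?_⟩
      rcases List.mem_cons.1 hc with rfl | hc
      · omega
      · have := hR.1 c hc; omega

lemma mem_rowInsert_fst_self (R : List ℕ) (x : ℕ) : x ∈ (rowInsert R x).1 := by
  induction R with
  | nil => simp [rowInsert]
  | cons a r ih =>
    unfold rowInsert
    split_ifs <;> simp [ih]

lemma exists_rowInsert_snd_eq_some {R : List ℕ} {x c : ℕ} (hc : c ∈ R) (hxc : x < c) :
    ∃ b, (rowInsert R x).2 = some b := by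
  rw [← Option.ne_none_iff_exists', Ne, rowInsert_snd_eq_none_iff]
  exact fun h => absurd (h c hc) (by omega)

-- `x` bumps an entry `≤ c` and `z` an entry `> z`: the two insertions touch different cells.
lemma rowInsert_comm {R : List ℕ} (hR : R.Pairwise (· ≤ ·)) {x z c : ℕ} (hc : c ∈ R)
    (hxc : x < c) (hcz : c ≤ z) :
    (rowInsert (rowInsert R x).1 z).1 = (rowInsert (rowInsert R z).1 x).1 ∧
      (rowInsert (rowInsert R x).1 z).2 = (rowInsert R z).2 ∧
      (rowInsert (rowInsert R z).1 x).2 = (rowInsert R x).2 := by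
  obtain ⟨P, Q, rfl, hP, hQ⟩ := exists_eq_append_of_pairwise hR x
  have hcQ : c ∈ Q := by
    rcases List.mem_append.1 hc with hc | hc
    · exact absurd (hP c hc) (by omega)
    · exact hc
  obtain ⟨b, Q, rfl⟩ := List.exists_cons_of_ne_nil (List.ne_nil_of_mem hcQ)
  have hbQ := (List.pairwise_cons.1 (List.pairwise_append.1 hR).2.1)
  have hbz : b ≤ z := by
    rcases List.mem_cons.1 hcQ with rfl | hcQ
    exacts [hcz, (hbQ.1 c hcQ).trans hcz]
  obtain ⟨Q₁, Q₂, rfl, hQ₁, -⟩ := exists_eq_append_of_pairwise hbQ.2 z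
  have hPz : ∀ a ∈ P, a ≤ z := fun a ha => (hP a ha).trans (by omega)
  have hxb : x < b := hQ b (by simp)
  have hinsert_z : ∀ v, v ≤ z → rowInsert (P ++ v :: (Q₁ ++ Q₂)) z =
      (P ++ v :: (Q₁ ++ (rowInsert Q₂ z).1), (rowInsert Q₂ z).2) := fun v hv => by
    simpa using rowInsert_append_of_forall_le (P := P ++ v :: Q₁) (x := z)
      (by simp only [List.mem_append, List.mem_cons]; grind) Q₂
  simp [rowInsert_append_cons hP hxb, hinsert_z b hbz, hinsert_z x (by omega)]

-- `z` lands in the cell that `y` would take, and `y` then bumps it out again.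
lemma rowInsert_rowInsert_of_lt {R : List ℕ} (hR : R.Pairwise (· ≤ ·)) {y z : ℕ} (hyz : y < z)
    (hgap : ∀ c ∈ R, c ≤ y ∨ z < c) :
    rowInsert (rowInsert R z).1 y = ((rowInsert R y).1, some z) ∧
      (rowInsert R z).2 = (rowInsert R y).2 := by
  obtain ⟨P, Q, rfl, hP, hQ⟩ := exists_eq_append_of_pairwise hR y
  have hPz : ∀ a ∈ P, a ≤ z := fun a ha => (hP a ha).trans hyz.le
  rcases Q with _ | ⟨q, Q⟩
  · simp only [List.append_nil] at hP ⊢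
    rw [rowInsert_of_forall_le hPz, rowInsert_of_forall_le hP, rowInsert_append_cons hP hyz]
    simp
  · have hzq : z < q := (hgap q (by simp)).resolve_left (by have := hQ q (by simp); omega)
    simp [rowInsert_append_cons hPz hzq, rowInsert_append_cons hP (hyz.trans hzq),
      rowInsert_append_cons hP hyz]

def rowInsertWord (R : List ℕ) : List ℕ → List ℕ × List ℕ
  | [] => (R, [])
  | x :: w => ((rowInsertWord (rowInsert R x).1 w).1,
      (rowInsert R x).2.toList ++ (rowInsertWord (rowInsert R x).1 w).2)

inductive KnuthMove : List ℕ → List ℕ → Prop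
  | yxz {x y z : ℕ} : x < y → y ≤ z → KnuthMove [y, x, z] [y, z, x]
  | xzy {x y z : ℕ} : x ≤ y → y < z → KnuthMove [x, z, y] [z, x, y]

lemma rowInsertWord_yxz {R : List ℕ} (hR : R.Pairwise (· ≤ ·)) {x y z : ℕ} (hxy : x < y)
    (hyz : y ≤ z) :
    (rowInsertWord R [y, x, z]).1 = (rowInsertWord R [y, z, x]).1 ∧
      ReflGen (SymmGen KnuthMove) (rowInsertWord R [y, x, z]).2 (rowInsertWord R [y, z, x]).2 := by
  set R₁ := (rowInsert R y).1 with hR₁_def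
  have hR₁ : R₁.Pairwise (· ≤ ·) := pairwise_rowInsert hR y
  have hy : y ∈ R₁ := mem_rowInsert_fst_self R y
  obtain ⟨hrow, hz, hx⟩ := rowInsert_comm hR₁ hy hxy hyz
  obtain ⟨bx, hbx⟩ := exists_rowInsert_snd_eq_some hy hxy
  simp only [rowInsertWord, ← hR₁_def, hrow, hz, hx, hbx, true_and]
  rcases hbz : (rowInsert R₁ z).2 with _ | bz
  · exact ReflGen.refl
  obtain ⟨hbzR₁, hzbz⟩ := rowInsert_snd_eq_some hbz
  have hbzR : bz ∈ R := (mem_rowInsert_fst hbzR₁).resolve_left (by omega)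
  obtain ⟨b, hb⟩ := exists_rowInsert_snd_eq_some hbzR (show y < bz by omega)
  have hbxy : bx ≤ y := le_of_rowInsert_snd_eq_some hR₁ hbx hy hxy
  have hyb : y < b := (rowInsert_snd_eq_some hb).2
  have hbbz : b ≤ bz := le_of_rowInsert_snd_eq_some hR hb hbzR (by omega)
  rw [hb]
  exact ReflGen.single (.of_rel (KnuthMove.yxz (by omega) hbbz))

lemma rowInsertWord_xzy_of_mem {R : List ℕ} (hR : R.Pairwise (· ≤ ·)) {x y z c : ℕ}
    (hxy : x ≤ y) (hyz : y < z) (hc : c ∈ R) (hxc : x < c) (hcz : c ≤ z) :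
    (rowInsertWord R [x, z, y]).1 = (rowInsertWord R [z, x, y]).1 ∧
      ReflGen (SymmGen KnuthMove) (rowInsertWord R [x, z, y]).2 (rowInsertWord R [z, x, y]).2 := by
  obtain ⟨hrow, hz, hx⟩ := rowInsert_comm hR hc hxc hcz
  obtain ⟨bx, hbx⟩ := exists_rowInsert_snd_eq_some hc hxc
  simp only [rowInsertWord, hrow, hz, hx, hbx, true_and]
  rcases hbz : (rowInsert R z).2 with _ | bz
  · exact ReflGen.refl
  set R₂ := (rowInsert (rowInsert R z).1 x).1
  have hR₂ : R₂.Pairwise (· ≤ ·) := pairwise_rowInsert (pairwise_rowInsert hR z) x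
  have hzR₂ : z ∈ R₂ := hrow ▸ mem_rowInsert_fst_self _ z
  obtain ⟨b, hb⟩ := exists_rowInsert_snd_eq_some hzR₂ hyz
  obtain ⟨hbR₂, hyb⟩ := rowInsert_snd_eq_some hb
  have hbz' : b ≤ z := le_of_rowInsert_snd_eq_some hR₂ hb hzR₂ hyz
  have hzbz : z < bz := (rowInsert_snd_eq_some hbz).2
  have hbxb : bx ≤ b := by
    rw [← hrow] at hbR₂
    rcases mem_rowInsert_fst hbR₂ with rfl | hbR₁
    · exact (le_of_rowInsert_snd_eq_some hR hbx hc hxc).trans hcz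
    · have hbR := (mem_rowInsert_fst hbR₁).resolve_left (by omega)
      exact le_of_rowInsert_snd_eq_some hR hbx hbR (by omega)
  rw [hb]
  exact ReflGen.single (.of_rel (KnuthMove.xzy hbxb (by omega)))

lemma rowInsertWord_xzy_of_forall {R : List ℕ} (hR : R.Pairwise (· ≤ ·)) {x y z : ℕ}
    (hxy : x ≤ y) (hyz : y < z) (hgap : ∀ c ∈ R, x < c → z < c) :
    (rowInsertWord R [x, z, y]).1 = (rowInsertWord R [z, x, y]).1 ∧
      ReflGen (SymmGen KnuthMove) (rowInsertWord R [x, z, y]).2 (rowInsertWord R [z, x, y]).2 := by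
  set R₁ := (rowInsert R x).1 with hR₁_def
  have hR₁ : R₁.Pairwise (· ≤ ·) := pairwise_rowInsert hR x
  obtain ⟨hzx, hzx₂⟩ := rowInsert_rowInsert_of_lt hR (hxy.trans_lt hyz)
    (fun c hc => (le_or_gt c x).imp_right (hgap c hc))
  have hgap₁ : ∀ c ∈ R₁, c ≤ y ∨ z < c := by
    intro c hc
    rcases mem_rowInsert_fst hc with rfl | hc
    · exact Or.inl hxy
    · rcases le_or_gt c x with h | h
      exacts [Or.inl (h.trans hxy), Or.inr (hgap c hc h)]
  obtain ⟨hzy, hzy₂⟩ := rowInsert_rowInsert_of_lt hR₁ hyz hgap₁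
  simp only [rowInsertWord, ← hR₁_def, hzx, hzy, hzx₂, hzy₂, true_and]
  rcases hq' : (rowInsert R₁ y).2 with _ | q'
  · exact ReflGen.refl
  obtain ⟨hq'R₁, hyq'⟩ := rowInsert_snd_eq_some hq'
  have hq'R : q' ∈ R := (mem_rowInsert_fst hq'R₁).resolve_left (by omega)
  obtain ⟨q, hq⟩ := exists_rowInsert_snd_eq_some hq'R (show x < q' by omega)
  obtain ⟨hqR, hxq⟩ := rowInsert_snd_eq_some hq
  rw [hq]
  exact ReflGen.single (.of_rel_symm
    (KnuthMove.yxz (hgap q hqR hxq) (le_of_rowInsert_snd_eq_some hR hq hq'R (by omega))))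

lemma rowInsertWord_xzy {R : List ℕ} (hR : R.Pairwise (· ≤ ·)) {x y z : ℕ} (hxy : x ≤ y)
    (hyz : y < z) :
    (rowInsertWord R [x, z, y]).1 = (rowInsertWord R [z, x, y]).1 ∧
      ReflGen (SymmGen KnuthMove) (rowInsertWord R [x, z, y]).2 (rowInsertWord R [z, x, y]).2 := by
  by_cases hgap : ∃ c ∈ R, x < c ∧ c ≤ z
  · obtain ⟨c, hc, hxc, hcz⟩ := hgap
    exact rowInsertWord_xzy_of_mem hR hxy hyz hc hxc hcz
  · push Not at hgap
    exact rowInsertWord_xzy_of_forall hR hxy hyz hgap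

lemma rowInsertWord_of_knuthMove {R : List ℕ} (hR : R.Pairwise (· ≤ ·)) {u v : List ℕ}
    (h : KnuthMove u v) :
    (rowInsertWord R u).1 = (rowInsertWord R v).1 ∧
      ReflGen (SymmGen KnuthMove) (rowInsertWord R u).2 (rowInsertWord R v).2 := by
  cases h with
  | yxz hxy hyz => exact rowInsertWord_yxz hR hxy hyz
  | xzy hxy hyz => exact rowInsertWord_xzy hR hxy hyz

def RowsSorted (T : List (List ℕ)) : Prop := ∀ r ∈ T, r.Pairwise (· ≤ ·)

lemma tabInsert_cons (R : List ℕ) (T : List (List ℕ)) (x : ℕ) :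
    tabInsert (R :: T) x = (rowInsert R x).1 :: (rowInsert R x).2.toList.foldl tabInsert T := by
  rcases h : rowInsert R x with ⟨R', _ | b⟩ <;> simp [tabInsert, h]

lemma foldl_tabInsert_cons (R : List ℕ) (T : List (List ℕ)) (w : List ℕ) :
    w.foldl tabInsert (R :: T) =
      (rowInsertWord R w).1 :: (rowInsertWord R w).2.foldl tabInsert T := by
  induction w generalizing R T with
  | nil => rfl
  | cons x w ih => simp [tabInsert_cons, ih, rowInsertWord]

lemma RowsSorted.tabInsert {T : List (List ℕ)} (hT : RowsSorted T) (x : ℕ) :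
    RowsSorted (tabInsert T x) := by
  induction T generalizing x with
  | nil => simp [RowsSorted, _root_.tabInsert]
  | cons R T ih =>
    obtain ⟨hR, hT'⟩ := List.forall_mem_cons.1 hT
    rcases h : rowInsert R x with ⟨R', _ | b⟩
    all_goals
      simp only [_root_.tabInsert, h, RowsSorted, List.mem_cons, forall_eq_or_imp]
      refine ⟨by simpa [h] using pairwise_rowInsert hR x, ?_⟩
    exacts [hT', ih hT' b]

lemma RowsSorted.foldl_tabInsert {T : List (List ℕ)} (hT : RowsSorted T) (w : List ℕ) :
    RowsSorted (w.foldl _root_.tabInsert T) := by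
  induction w generalizing T with
  | nil => exact hT
  | cons x w ih => exact ih (hT.tabInsert x)

lemma rowsSorted_RSKP (w : List ℕ) : RowsSorted (RSKP w) :=
  RowsSorted.foldl_tabInsert (by simp [RowsSorted]) w

lemma RSKP_append_singleton (w : List ℕ) (x : ℕ) : RSKP (w ++ [x]) = tabInsert (RSKP w) x := by
  simp [RSKP, List.foldl_append]

lemma foldl_tabInsert_of_knuthMove {T : List (List ℕ)} (hT : RowsSorted T) {u v : List ℕ}
    (h : KnuthMove u v) : u.foldl tabInsert T = v.foldl tabInsert T := by
  induction T generalizing u v with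
  | nil =>
    rcases h with ⟨hxy, hyz⟩ | ⟨hxy, hyz⟩
    · simp [tabInsert, rowInsert, Nat.not_le.2 hxy, hyz, (hxy.trans_le hyz).le]
    · simp [tabInsert, rowInsert, Nat.not_le.2 hyz, Nat.not_le.2 (hxy.trans_lt hyz), hxy,
        (hxy.trans hyz.le)]
  | cons R T ih =>
    obtain ⟨hR, hT'⟩ := List.forall_mem_cons.1 hT
    obtain ⟨hrow, hbump⟩ := rowInsertWord_of_knuthMove hR h
    rw [foldl_tabInsert_cons, foldl_tabInsert_cons, hrow]
    congr 1
    generalize (rowInsertWord R u).2 = bu, (rowInsertWord R v).2 = bv at hbump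
    rcases hbump with _ | (hbump | hbump)
    exacts [rfl, ih hT' hbump, (ih hT' hbump).symm]

inductive KnuthStep : List ℕ → List ℕ → Prop
  | mk (p : List ℕ) {a b : List ℕ} (s : List ℕ) :
      KnuthMove a b → KnuthStep (p ++ a ++ s) (p ++ b ++ s)

def KnuthEquiv : List ℕ → List ℕ → Prop := EqvGen KnuthStep

lemma KnuthStep.knuthEquiv {u v : List ℕ} (h : KnuthStep u v) : KnuthEquiv u v := EqvGen.rel u v h

namespace KnuthEquiv

lemma refl (u : List ℕ) : KnuthEquiv u u := EqvGen.refl u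

lemma symm {u v : List ℕ} (h : KnuthEquiv u v) : KnuthEquiv v u := EqvGen.symm u v h

lemma trans {u v w : List ℕ} (h₁ : KnuthEquiv u v) (h₂ : KnuthEquiv v w) : KnuthEquiv u w :=
  EqvGen.trans u v w h₁ h₂

lemma of_knuthMove {a b : List ℕ} (h : KnuthMove a b) : KnuthEquiv a b := by
  simpa using (KnuthStep.mk [] [] h).knuthEquiv

lemma map_of_step {f : List ℕ → List ℕ} (hf : ∀ u v, KnuthStep u v → KnuthEquiv (f u) (f v))
    {u v : List ℕ} (h : KnuthEquiv u v) : KnuthEquiv (f u) (f v) := by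
  induction h with
  | rel u v h => exact hf u v h
  | refl u => exact refl _
  | symm u v _ ih => exact ih.symm
  | trans u v w _ _ ih₁ ih₂ => exact ih₁.trans ih₂

lemma append_left (w : List ℕ) {u v : List ℕ} (h : KnuthEquiv u v) :
    KnuthEquiv (w ++ u) (w ++ v) :=
  h.map_of_step (f := (w ++ ·)) fun _ _ ⟨p, s, hab⟩ => by
    simpa using (KnuthStep.mk (w ++ p) s hab).knuthEquiv

lemma append_right (w : List ℕ) {u v : List ℕ} (h : KnuthEquiv u v) :
    KnuthEquiv (u ++ w) (v ++ w) :=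
  h.map_of_step (f := (· ++ w)) fun _ _ ⟨p, s, hab⟩ => by
    simpa using (KnuthStep.mk p (s ++ w) hab).knuthEquiv

lemma perm {u v : List ℕ} (h : KnuthEquiv u v) : u.Perm v := by
  induction h with
  | rel u v h =>
    obtain ⟨p, s, hab⟩ := h
    refine ((List.Perm.refl p).append ?_).append (List.Perm.refl s)
    cases hab with
    | yxz => exact (List.Perm.swap _ _ _).cons _
    | xzy => exact List.Perm.swap _ _ _
  | refl u => exact List.Perm.refl u
  | symm u v _ ih => exact ih.symm
  | trans u v w _ _ ih₁ ih₂ => exact ih₁.trans ih₂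

lemma filter {p : ℕ → Bool} (hp : ∀ a b c, a ≤ b → b ≤ c → p a → p c → p b) {u v : List ℕ}
    (h : KnuthEquiv u v) : KnuthEquiv (u.filter p) (v.filter p) := by
  refine h.map_of_step (f := (List.filter p)) fun _ _ ⟨q, s, hab⟩ => ?_
  simp only [List.filter_append]
  refine append_right _ (append_left _ ?_)
  cases hab with
  | @yxz x y z hxy hyz =>
    have := hp x y z hxy.le hyz
    cases hx : p x <;> cases hy : p y <;> cases hz : p z <;> simp_all [List.filter] <;>
      first | exact refl _ | exact of_knuthMove (.yxz hxy hyz)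
  | @xzy x y z hxy hyz =>
    have := hp x y z hxy hyz.le
    cases hx : p x <;> cases hy : p y <;> cases hz : p z <;> simp_all [List.filter] <;>
      first | exact refl _ | exact of_knuthMove (.xzy hxy hyz)

lemma foldl_tabInsert_eq {u v : List ℕ} (h : KnuthEquiv u v) {T : List (List ℕ)}
    (hT : RowsSorted T) : u.foldl tabInsert T = v.foldl tabInsert T := by
  induction h generalizing T with
  | rel u v h =>
    obtain ⟨p, s, hab⟩ := h
    simp only [List.foldl_append]
    rw [foldl_tabInsert_of_knuthMove (hT.foldl_tabInsert p) hab]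
  | refl u => rfl
  | symm u v _ ih => exact (ih hT).symm
  | trans u v w _ _ ih₁ ih₂ => exact (ih₁ hT).trans (ih₂ hT)

end KnuthEquiv

lemma knuthEquiv_cons_append_singleton {D : List ℕ} (hD : D.Pairwise (· ≤ ·)) {b x : ℕ}
    (hxb : x < b) (hbD : ∀ d ∈ D, b ≤ d) : KnuthEquiv (b :: (D ++ [x])) (b :: x :: D) := by
  induction D generalizing b with
  | nil => exact KnuthEquiv.refl _
  | cons d D ih =>
    rw [List.pairwise_cons] at hD
    have hbd : b ≤ d := hbD d (by simp)
    have hmove : KnuthEquiv ([] ++ [b, d, x] ++ D) ([] ++ [b, x, d] ++ D) :=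
      (KnuthStep.mk [] D (.yxz hxb hbd)).knuthEquiv.symm
    exact ((ih hD.2 (hxb.trans_le hbd) hD.1).append_left [b]).trans (by simpa using hmove)

lemma knuthEquiv_append_cons_cons {A : List ℕ} (hA : A.Pairwise (· ≤ ·)) {b x : ℕ}
    (hAx : ∀ a ∈ A, a ≤ x) (hxb : x < b) (D : List ℕ) :
    KnuthEquiv (A ++ b :: x :: D) (b :: (A ++ x :: D)) := by
  induction A using List.reverseRecOn generalizing x D with
  | nil => exact KnuthEquiv.refl _
  | append_singleton A a ih =>
    rw [List.pairwise_append] at hA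
    have hax : a ≤ x := hAx a (by simp)
    have hmove : KnuthEquiv (A ++ [a, b, x] ++ D) (A ++ [b, a, x] ++ D) :=
      (KnuthStep.mk A D (.xzy hax hxb)).knuthEquiv
    have ih' := ih hA.1 (fun c hc => hA.2.2 c hc a (by simp)) (hax.trans_lt hxb) (x :: D)
    simpa using hmove.trans (by simpa using ih')

lemma knuthEquiv_append_singleton_of_rowInsert {R R' : List ℕ} (hR : R.Pairwise (· ≤ ·))
    {x b : ℕ} (h : rowInsert R x = (R', some b)) : KnuthEquiv (R ++ [x]) (b :: R') := by
  obtain ⟨P, Q, rfl, hP, hQ⟩ := exists_eq_append_of_pairwise hR x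
  rcases Q with _ | ⟨c, Q⟩
  · simp [List.append_nil, rowInsert_of_forall_le hP] at h
  rw [rowInsert_append_cons hP (hQ c (by simp))] at h
  obtain ⟨rfl, rfl⟩ := Prod.mk.inj h |>.imp_right Option.some_inj.1
  obtain ⟨hPs, hcQ, -⟩ := List.pairwise_append.1 hR
  rw [List.pairwise_cons] at hcQ
  have hxc : x < c := hQ c (by simp)
  simpa using ((knuthEquiv_cons_append_singleton hcQ.2 hxc hcQ.1).append_left P).trans
    (knuthEquiv_append_cons_cons hPs hP hxc Q)

lemma readWord_cons (R : List ℕ) (T : List (List ℕ)) : readWord (R :: T) = readWord T ++ R := by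
  simp [readWord]

lemma knuthEquiv_readWord_tabInsert {T : List (List ℕ)} (hT : RowsSorted T) (x : ℕ) :
    KnuthEquiv (readWord (tabInsert T x)) (readWord T ++ [x]) := by
  induction T generalizing x with
  | nil => exact KnuthEquiv.refl _
  | cons R T ih =>
    obtain ⟨hR, hT'⟩ := List.forall_mem_cons.1 hT
    rcases h : rowInsert R x with ⟨R', _ | b⟩
    · have hx := rowInsert_of_forall_le (rowInsert_snd_eq_none_iff.1 (by rw [h]))
      simp only [tabInsert, hx, readWord_cons, List.append_assoc]
      exact KnuthEquiv.refl _
    · simp only [tabInsert, h, readWord_cons, List.append_assoc]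
      exact ((ih hT' b).append_right R').trans (by
        simpa using ((knuthEquiv_append_singleton_of_rowInsert hR h).symm.append_left (readWord T)))

lemma knuthEquiv_readWord_RSKP (w : List ℕ) : KnuthEquiv (readWord (RSKP w)) w := by
  induction w using List.reverseRecOn with
  | nil => exact KnuthEquiv.refl _
  | append_singleton w x ih =>
    rw [RSKP_append_singleton]
    exact (knuthEquiv_readWord_tabInsert (rowsSorted_RSKP w) x).trans (ih.append_right [x])

lemma readWord_map_filter (p : ℕ → Bool) (T : List (List ℕ)) :
    readWord (T.map (List.filter p)) = (readWord T).filter p := by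
  simp [readWord, List.filter_flatten, List.map_reverse]

lemma mem_of_mem_RSKP {w r : List ℕ} {v : ℕ} (hr : r ∈ RSKP w) (hv : v ∈ r) : v ∈ w :=
  (knuthEquiv_readWord_RSKP w).perm.subset (by simpa [readWord] using ⟨r, hr, hv⟩)

lemma rowInsert_map {f : ℕ → ℕ} (hf : StrictMono f) (R : List ℕ) (x : ℕ) :
    rowInsert (R.map f) (f x) = ((rowInsert R x).1.map f, (rowInsert R x).2.map f) := by
  induction R with
  | nil => simp [rowInsert]
  | cons a r ih =>
    by_cases hax : a ≤ x
    · simp [rowInsert, hax, hf.le_iff_le, ih]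
    · simp [rowInsert, hax, hf.le_iff_le]

lemma tabInsert_map {f : ℕ → ℕ} (hf : StrictMono f) (T : List (List ℕ)) (x : ℕ) :
    tabInsert (T.map (List.map f)) (f x) = (tabInsert T x).map (List.map f) := by
  induction T generalizing x with
  | nil => simp [tabInsert]
  | cons R T ih =>
    rcases h : rowInsert R x with ⟨R', _ | b⟩ <;>
      simp [tabInsert, rowInsert_map hf, h, ih]

lemma RSKP_map {f : ℕ → ℕ} (hf : StrictMono f) (w : List ℕ) :
    RSKP (w.map f) = (RSKP w).map (List.map f) := by
  suffices ∀ T : List (List ℕ),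
      (w.map f).foldl tabInsert (T.map (List.map f)) = (w.foldl tabInsert T).map (List.map f) from
    this []
  induction w with
  | nil => simp
  | cons x w ih => intro T; simp [← ih, tabInsert_map hf]

-- Rows holding only letters `> k` become empty, so `lowerPart k (RSKP w)` can only agree with the
-- insertion tableau of the small letters up to trailing empty rows.
def lowerPart (k : ℕ) (T : List (List ℕ)) : List (List ℕ) :=
  T.map (List.filter fun v => decide (v ≤ k))

lemma filter_rowInsert_fst_of_lt {k x : ℕ} (hkx : k < x) (R : List ℕ) :
    (rowInsert R x).1.filter (fun v => decide (v ≤ k)) = R.filter (fun v => decide (v ≤ k)) := by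
  induction R with
  | nil => simp [rowInsert, hkx]
  | cons a r ih =>
    unfold rowInsert
    split_ifs with hax
    · simp [List.filter_cons, ih]
    · simp [Nat.not_le.2 hkx, show ¬ a ≤ k by omega]

lemma rowInsert_filter_of_le {R : List ℕ} (hR : R.Pairwise (· ≤ ·)) {k x : ℕ} (hxk : x ≤ k) :
    rowInsert (R.filter fun v => decide (v ≤ k)) x =
      ((rowInsert R x).1.filter (fun v => decide (v ≤ k)),
        (rowInsert R x).2.filter (fun v => decide (v ≤ k))) := by
  induction R with
  | nil => simp [rowInsert, hxk]
  | cons a r ih =>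
    rw [List.pairwise_cons] at hR
    by_cases hax : a ≤ x
    · simp [rowInsert, hax, hax.trans hxk, ih hR.2]
    · by_cases hak : a ≤ k
      · simp [rowInsert, hax, hak, hxk, Option.filter_some]
      · have hr : r.filter (fun v => decide (v ≤ k)) = [] := by
          simpa using fun v hv => by have := hR.1 v hv; omega
        simp [rowInsert, hax, hak, hxk, hr, Option.filter_some]

lemma lowerPart_tabInsert_of_lt {k x : ℕ} (hkx : k < x) (T : List (List ℕ)) :
    ∃ e, lowerPart k (tabInsert T x) = lowerPart k T ++ List.replicate e [] := by
  induction T generalizing x with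
  | nil => exact ⟨1, by simp [lowerPart, tabInsert, hkx]⟩
  | cons R T ih =>
    rcases h : rowInsert R x with ⟨R', _ | b⟩
    · exact ⟨0, by simpa [lowerPart, tabInsert, h] using filter_rowInsert_fst_of_lt hkx R⟩
    · obtain ⟨e, he⟩ := ih (hkx.trans (rowInsert_snd_eq_some (by rw [h])).2)
      refine ⟨e, ?_⟩
      have hrow := filter_rowInsert_fst_of_lt hkx R
      simp only [lowerPart] at he ⊢
      simp [tabInsert, h, he, ← hrow]

lemma tabInsert_append_replicate_nil (L : List (List ℕ)) (e x : ℕ) :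
    ∃ e', tabInsert (L ++ List.replicate e []) x = tabInsert L x ++ List.replicate e' [] := by
  induction L generalizing x with
  | nil =>
    rcases e with _ | e
    · exact ⟨0, by simp⟩
    · exact ⟨e, by simp [List.replicate_succ, tabInsert, rowInsert]⟩
  | cons R L ih =>
    rcases h : rowInsert R x with ⟨R', _ | b⟩
    · exact ⟨e, by simp [tabInsert, h]⟩
    · obtain ⟨e', he'⟩ := ih b
      exact ⟨e', by simp [tabInsert, h, he']⟩

lemma lowerPart_tabInsert_of_le {T : List (List ℕ)} (hT : RowsSorted T) {k x : ℕ} (hxk : x ≤ k) :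
    ∃ e, lowerPart k (tabInsert T x) = tabInsert (lowerPart k T) x ++ List.replicate e [] := by
  induction T generalizing x with
  | nil => exact ⟨0, by simp [lowerPart, tabInsert, hxk]⟩
  | cons R T ih =>
    obtain ⟨hR, hT'⟩ := List.forall_mem_cons.1 hT
    have hrow := rowInsert_filter_of_le hR hxk
    rcases h : rowInsert R x with ⟨R', _ | b⟩
    · rw [h] at hrow
      exact ⟨0, by simp [lowerPart, tabInsert, h, hrow]⟩
    by_cases hbk : b ≤ k
    · rw [h] at hrow
      obtain ⟨e, he⟩ := ih hT' hbk
      simp only [lowerPart] at he ⊢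
      exact ⟨e, by simp [tabInsert, h, hrow, hbk, he, Option.filter_some]⟩
    · rw [h] at hrow
      obtain ⟨e, he⟩ := lowerPart_tabInsert_of_lt (Nat.lt_of_not_le hbk) T
      simp only [lowerPart] at he ⊢
      exact ⟨e, by simp [tabInsert, h, hrow, hbk, he, Option.filter_some]⟩

lemma exists_lowerPart_RSKP (k : ℕ) (w : List ℕ) :
    ∃ e, lowerPart k (RSKP w) =
      RSKP (w.filter fun v => decide (v ≤ k)) ++ List.replicate e [] := by
  induction w using List.reverseRecOn with
  | nil => exact ⟨0, rfl⟩
  | append_singleton w x ih =>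
    obtain ⟨e, he⟩ := ih
    rw [RSKP_append_singleton, List.filter_append]
    by_cases hxk : x ≤ k
    · obtain ⟨e₁, he₁⟩ := lowerPart_tabInsert_of_le (rowsSorted_RSKP w) hxk
      obtain ⟨e₂, he₂⟩ :=
        tabInsert_append_replicate_nil (RSKP (w.filter fun v => decide (v ≤ k))) e x
      exact ⟨e₂ + e₁, by simp [hxk, RSKP_append_singleton, he₁, he, he₂]⟩
    · obtain ⟨e₁, he₁⟩ := lowerPart_tabInsert_of_lt (Nat.lt_of_not_le hxk) (RSKP w)
      exact ⟨e + e₁, by simp [hxk, he₁, he]⟩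

lemma ne_nil_of_mem_tabInsert {T : List (List ℕ)} (hT : ∀ r ∈ T, r ≠ []) (x : ℕ) :
    ∀ r ∈ tabInsert T x, r ≠ [] := by
  induction T generalizing x with
  | nil => simp [tabInsert]
  | cons R T ih =>
    obtain ⟨-, hT'⟩ := List.forall_mem_cons.1 hT
    have hx : (rowInsert R x).1 ≠ [] := List.ne_nil_of_mem (mem_rowInsert_fst_self R x)
    rcases h : rowInsert R x with ⟨R', _ | b⟩
    all_goals
      rw [h] at hx
      simp only [tabInsert, h, List.mem_cons, forall_eq_or_imp]
    exacts [⟨hx, hT'⟩, ⟨hx, ih hT' b⟩]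

lemma ne_nil_of_mem_RSKP {w r : List ℕ} (hr : r ∈ RSKP w) : r ≠ [] := by
  induction w using List.reverseRecOn generalizing r with
  | nil => simp [RSKP] at hr
  | append_singleton w x ih =>
    rw [RSKP_append_singleton] at hr
    exact ne_nil_of_mem_tabInsert (fun r hr => ih hr) x r hr

lemma filter_ne_nil_restrictTab_RSKP {k : ℕ} {w : List ℕ} (hw : ∀ v ∈ w, 1 ≤ v) :
    (restrictTab (RSKP w) 1 k).filter (fun r => decide (r ≠ [])) =
      RSKP (w.filter fun v => decide (v ≤ k)) := by
  have hlow : restrictTab (RSKP w) 1 k = lowerPart k (RSKP w) := by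
    refine List.map_congr_left fun r hr => List.filter_congr fun v hv => ?_
    simpa using fun _ => hw v (mem_of_mem_RSKP hr hv)
  obtain ⟨e, he⟩ := exists_lowerPart_RSKP k w
  have hrows : (RSKP (w.filter fun v => decide (v ≤ k))).filter (fun r => decide (r ≠ [])) =
      RSKP (w.filter fun v => decide (v ≤ k)) :=
    List.filter_eq_self.2 fun r hr => by simpa using ne_nil_of_mem_RSKP hr
  rw [hlow, he, List.filter_append, hrows]
  simp +contextual

lemma knuthEquiv_readWord_restrictTab_RSKP (w : List ℕ) (i j : ℕ) :
    KnuthEquiv (readWord (restrictTab (RSKP w) i j))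
      (w.filter fun v => decide (i ≤ v ∧ v ≤ j)) := by
  rw [restrictTab, readWord_map_filter]
  exact (knuthEquiv_readWord_RSKP w).filter fun a b c hab hbc ha hc => by
    simp only [Bool.decide_and, Bool.and_eq_true, decide_eq_true_eq] at *
    omega

-- Instead of lowering the large letters by `k`, raise `τ` by `k`: insertion commutes with the
-- injective map `(· + k)`.
lemma stTab_RSKP {k l : ℕ} {w τ : List ℕ} (hw : ∀ v ∈ w, v ≤ k + l)
    (h : w.filter (fun v => decide (k < v)) = τ.map (· + k)) :
    stTab (RSKP w) (k + 1) (k + l) = RSKP τ := by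
  set W := readWord (restrictTab (RSKP w) (k + 1) (k + l)) with hW_def
  have hW : KnuthEquiv W (τ.map (· + k)) := by
    have hfilter : w.filter (fun v => decide (k + 1 ≤ v ∧ v ≤ k + l)) = τ.map (· + k) := by
      rw [← h]
      refine List.filter_congr fun v hv => ?_
      have := hw v hv
      simp only [decide_eq_decide]
      omega
    exact hfilter ▸ knuthEquiv_readWord_restrictTab_RSKP w (k + 1) (k + l)
  have hWk : ∀ v ∈ W, k < v := fun v hv => by
    rw [hW_def, restrictTab, readWord_map_filter] at hv
    simp only [List.mem_filter, Bool.decide_and, Bool.and_eq_true, decide_eq_true_eq] at hv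
    omega
  have hmono : StrictMono (· + k) := add_left_strictMono
  apply List.map_injective_iff.2 (List.map_injective_iff.2 (add_left_injective k))
  rw [stTab, ← hW_def, Nat.add_sub_cancel, ← RSKP_map hmono, ← RSKP_map hmono, List.map_map]
  have hWW : W.map ((· + k) ∘ (· - k)) = W :=
    (List.map_congr_left fun v hv => by
      have := hWk v hv
      simp only [Function.comp_apply, id_eq]
      omega).trans (List.map_id W)
  rw [hWW]
  exact hW.foldl_tabInsert_eq (by simp [RowsSorted])

theorem shuffle_restriction_insertion_tableaux_general (k l : ℕ) (σ τ ρ : List ℕ)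
    (hρ : IsPermWord (k + l) ρ)
    (h₁ : ρ.filter (fun v => decide (v ≤ k)) = σ)
    (h₂ : ρ.filter (fun v => decide (k < v)) = τ.map (· + k)) :
    (restrictTab (RSKP ρ) 1 k).filter (fun r => decide (r ≠ [])) = RSKP σ ∧
      stTab (RSKP ρ) (k + 1) (k + l) = RSKP τ := by
  have hρ' : ∀ v ∈ ρ, 1 ≤ v ∧ v ≤ k + l := fun v hv => by
    have := List.mem_range'_1.1 (hρ.mem_iff.1 hv)
    omega
  exact ⟨h₁ ▸ filter_ne_nil_restrictTab_RSKP fun v hv => (hρ' v hv).1,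
    stTab_RSKP (fun v hv => (hρ' v hv).2) h₂⟩

/-- Let `σ ∈ S_k`, `τ ∈ S_ℓ`, `n = k + ℓ`, and let `ρ ∈ Sₙ` be a shuffle
of `σ` and `τ̄` (where `τ̄` adds `k` to every letter of `τ`). Then the RSK insertion
tableau of `ρ` restricted to the entries `{1, …, k}` equals `P(σ)`, and the
standardization of its restriction to the entries `{k+1, …, n}` equals `P(τ)`. -/
theorem shuffle_restriction_insertion_tableaux (k l : ℕ) (σ τ ρ : List ℕ)
    (hσ : IsPermWord k σ) (hτ : IsPermWord l τ) (hρ : IsPermWord (k + l) ρ)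
    (h₁ : ρ.filter (fun v => decide (v ≤ k)) = σ)
    (h₂ : ρ.filter (fun v => decide (k < v)) = τ.map (· + k)) :
    (restrictTab (RSKP ρ) 1 k).filter (fun r => decide (r ≠ [])) = RSKP σ ∧
      stTab (RSKP ρ) (k + 1) (k + l) = RSKP τ :=
  shuffle_restriction_insertion_tableaux_general k l σ τ ρ hρ h₁ h₂
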